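/- arXiv:1108.0384 — 3 statements merged into one kernel-verified Lean document; each statement's English description precedes it below -/
import Mathlib

section
/- The exponential distribution with rate parameter λ > 0 on [0,∞) satisfies the Poincaré inequality with constant 4/λ²: for every continuously differentiable f with f, f' square integrable with respect to the measure, Var(f) ≤ (4/λ²) ∫₀^∞ |f'(x)|² λ e^{-λx} dx. -/
/-! Since the variance is invariant under shifts and bounded by the second moment, it suffices
to bound `∫ g²` for `g = f - f 0`, which vanishes at `0`. For such `g`, integrating
`(g² e^{-λx})' = (2 g g' - λ g²) e^{-λx}` over `[0, T]` gives `λ ∫₀ᵀ g² e^{-λx} ≤ 2 ∫₀ᵀ g g' e^{-λx}`,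
and `2 g g' ≤ (λ/2) g² + (2/λ) g'²` turns this into `∫₀ᵀ g² λe^{-λx} ≤ (4/λ²) ∫₀ᵀ g'² λe^{-λx}`;
then let `T → ∞`. -/

open MeasureTheory ProbabilityTheory Set Real Filter

lemma expMeasure_eq_withDensity (l : ℝ) :
    expMeasure l =
      (volume.restrict (Ici 0)).withDensity fun x => ENNReal.ofReal (l * exp (-(l * x))) := by
  rw [expMeasure, gammaMeasure, ← withDensity_indicator measurableSet_Ici]
  congr 1
  funext x
  rw [gammaPDF, gammaPDFReal]
  by_cases hx : 0 ≤ x <;> simp [hx]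

lemma integral_expMeasure {l : ℝ} (hl : 0 ≤ l) (g : ℝ → ℝ) :
    ∫ x, g x ∂expMeasure l = ∫ x in Ici 0, g x * (l * exp (-(l * x))) := by
  rw [expMeasure_eq_withDensity, integral_withDensity_eq_integral_toReal_smul (by fun_prop)
    (ae_of_all _ fun _ => ENNReal.ofReal_lt_top)]
  simp_rw [ENNReal.toReal_ofReal (by positivity : 0 ≤ l * exp _), smul_eq_mul, mul_comm]

lemma integrable_expMeasure_iff {l : ℝ} (hl : 0 ≤ l) (g : ℝ → ℝ) :
    Integrable g (expMeasure l) ↔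
      IntegrableOn (fun x => g x * (l * exp (-(l * x)))) (Ici 0) := by
  rw [expMeasure_eq_withDensity, integrable_withDensity_iff (by fun_prop)
    (ae_of_all _ fun _ => ENNReal.ofReal_lt_top)]
  simp_rw [ENNReal.toReal_ofReal (by positivity : 0 ≤ l * exp _)]
  rfl

lemma intervalIntegral_sq_mul_exp_le_of_hasDerivAt {l : ℝ} (hl : 0 < l) {g g' : ℝ → ℝ}
    (hg : ∀ x, HasDerivAt g (g' x) x) (hg' : Continuous g') (hg0 : g 0 = 0) {T : ℝ}
    (hT : 0 ≤ T) :
    ∫ x in 0..T, g x ^ 2 * (l * exp (-(l * x))) ≤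
      4 / l ^ 2 * ∫ x in 0..T, g' x ^ 2 * (l * exp (-(l * x))) := by
  have hgc : Continuous g := continuous_iff_continuousAt.2 fun x => (hg x).continuousAt
  have hderiv : ∀ x, HasDerivAt (fun y => g y ^ 2 * exp (-(l * y)))
      ((2 * g x * g' x - l * g x ^ 2) * exp (-(l * x))) x := fun x => by
    have hexp : HasDerivAt (fun y => exp (-(l * y))) (exp (-(l * x)) * -(l * 1)) x :=
      (((hasDerivAt_id x).const_mul l).neg).exp
    exact (((hg x).fun_pow 2).mul hexp).congr_deriv (by norm_num; ring)
  have hpoint : ∀ x, g x ^ 2 * (l * exp (-(l * x))) - 4 / l ^ 2 * (g' x ^ 2 * (l * exp (-(l * x))))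
      ≤ -2 * ((2 * g x * g' x - l * g x ^ 2) * exp (-(l * x))) := fun x => by
    have hgap : -2 * ((2 * g x * g' x - l * g x ^ 2) * exp (-(l * x))) -
        (g x ^ 2 * (l * exp (-(l * x))) - 4 / l ^ 2 * (g' x ^ 2 * (l * exp (-(l * x))))) =
        exp (-(l * x)) / l * (l * g x - 2 * g' x) ^ 2 := by
      field_simp
      ring
    rw [← sub_nonneg, hgap]
    positivity
  have hint : ∀ h : ℝ → ℝ, Continuous h → IntervalIntegrable h volume 0 T :=
    fun h hh => hh.intervalIntegrable 0 T
  suffices ∫ x in 0..T, g x ^ 2 * (l * exp (-(l * x))) -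
      4 / l ^ 2 * (g' x ^ 2 * (l * exp (-(l * x)))) ≤ 0 by
    rwa [intervalIntegral.integral_sub (hint _ (by fun_prop)) (hint _ (by fun_prop)),
      intervalIntegral.integral_const_mul, sub_nonpos] at this
  calc _ ≤ ∫ x in 0..T, -2 * ((2 * g x * g' x - l * g x ^ 2) * exp (-(l * x))) :=
        intervalIntegral.integral_mono_on hT (hint _ (by fun_prop)) (hint _ (by fun_prop))
          fun x _ => hpoint x
    _ = -2 * (g T ^ 2 * exp (-(l * T)) - g 0 ^ 2 * exp (-(l * 0))) := by
      rw [intervalIntegral.integral_const_mul,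
        intervalIntegral.integral_eq_sub_of_hasDerivAt (fun x _ => hderiv x) (hint _ (by fun_prop))]
    _ ≤ 0 := by
      rw [hg0]
      nlinarith [sq_nonneg (g T), exp_pos (-(l * T))]

theorem integral_sq_expMeasure_le_of_hasDerivAt {l : ℝ} (hl : 0 < l) {g g' : ℝ → ℝ}
    (hg : ∀ x, HasDerivAt g (g' x) x) (hg' : Continuous g') (hg0 : g 0 = 0)
    (hg2 : Integrable (fun x => g x ^ 2) (expMeasure l))
    (hg'2 : Integrable (fun x => g' x ^ 2) (expMeasure l)) :
    ∫ x, g x ^ 2 ∂expMeasure l ≤ 4 / l ^ 2 * ∫ x, g' x ^ 2 ∂expMeasure l := by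
  rw [integrable_expMeasure_iff hl.le] at hg2 hg'2
  simp only [integral_expMeasure hl.le, integral_Ici_eq_integral_Ioi]
  exact le_of_tendsto_of_tendsto
    (intervalIntegral_tendsto_integral_Ioi 0 (hg2.mono_set Ioi_subset_Ici_self) tendsto_id)
    ((intervalIntegral_tendsto_integral_Ioi 0 (hg'2.mono_set Ioi_subset_Ici_self)
      tendsto_id).const_mul _)
    ((eventually_ge_atTop 0).mono fun _ hT =>
      intervalIntegral_sq_mul_exp_le_of_hasDerivAt hl hg hg' hg0 hT)

/-- The exponential distribution with rate `l > 0` satisfies the Poincaré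
inequality with constant `4 / l²`. -/
theorem exponential_poincare (l : ℝ) (hl : 0 < l) :
    ∀ f : ℝ → ℝ, ContDiff ℝ 1 f →
      MemLp f 2 (expMeasure l) → MemLp (deriv f) 2 (expMeasure l) →
      (∫ x, f x ^ 2 ∂(expMeasure l)) - (∫ x, f x ∂(expMeasure l)) ^ 2 ≤
        (4 / l ^ 2) * ∫ x in Set.Ici (0 : ℝ),
          deriv f x ^ 2 * (l * Real.exp (-(l * x))) := by
  intro f hf hf2 hf'2
  have := isProbabilityMeasure_expMeasure hl
  rw [← integral_expMeasure hl.le]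
  calc (∫ x, f x ^ 2 ∂expMeasure l) - (∫ x, f x ∂expMeasure l) ^ 2
      = Var[fun x => f x - f 0; expMeasure l] := by
        rw [variance_sub_const hf2.1, variance_eq_sub hf2]
        rfl
    _ ≤ ∫ x, (f x - f 0) ^ 2 ∂expMeasure l :=
        variance_le_expectation_sq (hf2.1.sub aestronglyMeasurable_const)
    _ ≤ 4 / l ^ 2 * ∫ x, deriv f x ^ 2 ∂expMeasure l :=
        integral_sq_expMeasure_le_of_hasDerivAt hl
          (fun x => ((hf.differentiable one_ne_zero x).hasDerivAt).sub_const (f 0))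
          (hf.continuous_deriv le_rfl) (sub_self _)
          (hf2.sub (memLp_const _)).integrable_sq hf'2.integrable_sq
end

section
/- Let f: (ℝ₊)^{n−1} → ℝ be continuously differentiable and define g: ℝⁿ → ℝ by g(x) = f(x₂−x₁, …, x_n−x_{n−1}). Then at every point, ‖∇_y f‖² ≤ λ_n ‖∇_x g‖², where λ_n = 1/(2−2cos(π/n)) and the gradients are evaluated at corresponding points y = (x₂−x₁,…,x_n−x_{n−1}). -/
/-!
By the chain rule `∇(f ∘ D) x = D† (∇f (D x))`, and `(D† v)ⱼ = uⱼ - uⱼ₊₁` where `u` is `v`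
padded by a zero at both ends. So the claim is the discrete Dirichlet–Poincaré inequality
`(2 - 2 cos (π / n)) ∑ uₖ² ≤ ∑ (uₖ₊₁ - uₖ)²` for `u₀ = uₙ = 0`. It follows from the ground-state
trick: if `t ≥ 0` satisfies `tₖ₋₁ + tₖ₊₁ ≤ c tₖ` (here `tₖ = sin (k π / n)`, `c = 2 cos (π / n)`),
weighted AM-GM `2 uₖ uₖ₊₁ ≤ (tₖ₊₁ / tₖ) uₖ² + (tₖ / tₖ₊₁) uₖ₊₁²` summed over `k` bounds the
cross terms of `∑ (uₖ₊₁ - uₖ)²` by `c ∑ uₖ²`.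
-/

open Real Finset

theorem Finset.sum_range_eq_sum_range_succ_of_eq_zero {M : Type*} [AddCommMonoid M] {N : ℕ}
    {g : ℕ → M} (h0 : g 0 = 0) (hN : g N = 0) :
    ∑ k ∈ range N, g k = ∑ k ∈ range N, g (k + 1) := by
  rw [← add_zero (∑ k ∈ range N, g k), ← hN, ← sum_range_succ, sum_range_succ', h0, add_zero]

/-- A weight may vanish where its variable does, since then `x / 0 = 0` kills the other term. -/
theorem two_mul_mul_le_div_mul_sq_add_div_mul_sq {p q a b : ℝ} (hp : 0 ≤ p) (hq : 0 ≤ q)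
    (ha : p = 0 → a = 0) (hb : q = 0 → b = 0) :
    2 * a * b ≤ q / p * a ^ 2 + p / q * b ^ 2 := by
  rcases hp.eq_or_lt with rfl | hp
  · simp [ha rfl]
  rcases hq.eq_or_lt with rfl | hq
  · simp [hb rfl]
  have key : q / p * a ^ 2 + p / q * b ^ 2 - 2 * a * b = (q * a - p * b) ^ 2 / (p * q) := by
    field_simp
    ring
  linarith [div_nonneg (sq_nonneg (q * a - p * b)) (mul_pos hp hq).le]

section Supersolution

variable {N : ℕ} {c : ℝ} {t u : ℕ → ℝ}

theorem sum_two_mul_mul_succ_le_of_supersolution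
    (ht : ∀ k ≤ N, 0 ≤ t k) (htu : ∀ k ≤ N, t k = 0 → u k = 0)
    (hrec : ∀ k, k + 2 ≤ N → t k + t (k + 2) ≤ c * t (k + 1))
    (hu0 : u 0 = 0) (huN : u N = 0) :
    ∑ k ∈ range N, 2 * u k * u (k + 1) ≤ c * ∑ k ∈ range N, u (k + 1) ^ 2 := by
  have hshift : ∑ k ∈ range N, t (k + 1) / t k * u k ^ 2
      = ∑ k ∈ range N, t (k + 2) / t (k + 1) * u (k + 1) ^ 2 :=
    sum_range_eq_sum_range_succ_of_eq_zero (by simp [hu0]) (by simp [huN])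
  calc ∑ k ∈ range N, 2 * u k * u (k + 1)
      ≤ ∑ k ∈ range N, (t (k + 1) / t k * u k ^ 2 + t k / t (k + 1) * u (k + 1) ^ 2) := by
        gcongr with k hk
        have hk := mem_range.mp hk
        exact two_mul_mul_le_div_mul_sq_add_div_mul_sq (ht k hk.le) (ht (k + 1) hk)
          (htu k hk.le) (htu (k + 1) hk)
    _ = ∑ k ∈ range N, (t k + t (k + 2)) / t (k + 1) * u (k + 1) ^ 2 := by
        rw [sum_add_distrib, hshift, ← sum_add_distrib]
        exact sum_congr rfl fun k _ => by ring
    _ ≤ ∑ k ∈ range N, c * u (k + 1) ^ 2 := by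
        refine sum_le_sum fun k hk => ?_
        have hk := mem_range.mp hk
        rcases (ht (k + 1) hk).eq_or_lt with h | h
        · simp [htu (k + 1) hk h.symm]
        rcases (show k + 1 = N ∨ k + 2 ≤ N by omega) with hkN | hkN
        · simp [hkN, huN]
        exact mul_le_mul_of_nonneg_right ((div_le_iff₀ h).mpr (hrec k hkN)) (sq_nonneg _)
    _ = c * ∑ k ∈ range N, u (k + 1) ^ 2 := (mul_sum ..).symm

theorem mul_sum_sq_le_sum_sq_sub_of_supersolution
    (ht : ∀ k ≤ N, 0 ≤ t k) (htu : ∀ k ≤ N, t k = 0 → u k = 0)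
    (hrec : ∀ k, k + 2 ≤ N → t k + t (k + 2) ≤ c * t (k + 1))
    (hu0 : u 0 = 0) (huN : u N = 0) :
    (2 - c) * ∑ k ∈ range N, u k ^ 2 ≤ ∑ k ∈ range N, (u (k + 1) - u k) ^ 2 := by
  have hshift : ∑ k ∈ range N, u k ^ 2 = ∑ k ∈ range N, u (k + 1) ^ 2 :=
    sum_range_eq_sum_range_succ_of_eq_zero (by simp [hu0]) (by simp [huN])
  have hcross := sum_two_mul_mul_succ_le_of_supersolution ht htu hrec hu0 huN
  have hexpand : ∑ k ∈ range N, (u (k + 1) - u k) ^ 2 = ∑ k ∈ range N, u (k + 1) ^ 2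
      + ∑ k ∈ range N, u k ^ 2 - ∑ k ∈ range N, 2 * u k * u (k + 1) := by
    rw [← sum_add_distrib, ← sum_sub_distrib]
    exact sum_congr rfl fun k _ => by ring
  rw [hexpand, ← hshift] at *
  linarith

end Supersolution

theorem two_sub_two_cos_mul_sum_sq_le (N : ℕ) {u : ℕ → ℝ} (hu0 : u 0 = 0) (huN : u N = 0) :
    (2 - 2 * cos (π / N)) * ∑ k ∈ range N, u k ^ 2 ≤ ∑ k ∈ range N, (u (k + 1) - u k) ^ 2 := by
  set θ := π / N
  have hθ : ∀ k : ℕ, k * θ = k / N * π := fun k => by ring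
  have hle : ∀ k ≤ N, k * θ ≤ π := fun k hk => by
    rw [hθ]
    exact mul_le_of_le_one_left pi_pos.le (div_le_one_of_le₀ (by exact_mod_cast hk) (by positivity))
  refine mul_sum_sq_le_sum_sq_sub_of_supersolution (t := fun k => sin (k * θ))
    (fun k hk => sin_nonneg_of_nonneg_of_le_pi (by positivity) (hle k hk)) ?_ ?_ hu0 huN
  · intro k hk hsin
    rcases (show k = 0 ∨ k = N ∨ (0 < k ∧ k < N) by omega) with rfl | rfl | ⟨hk0, hkN⟩
    · exact hu0
    · exact huN
    have hN : (0 : ℝ) < N := by exact_mod_cast hk0.trans hkN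
    refine absurd hsin (sin_pos_of_pos_of_lt_pi (by positivity) ?_).ne'
    rw [hθ]
    exact mul_lt_of_lt_one_left pi_pos ((div_lt_one hN).mpr (by exact_mod_cast hkN))
  · intro k _
    have h1 : ((k + 2 : ℕ) : ℝ) * θ = ((k + 1 : ℕ) : ℝ) * θ + θ := by push_cast; ring
    have h2 : (k : ℝ) * θ = ((k + 1 : ℕ) : ℝ) * θ - θ := by push_cast; ring
    rw [h1, h2, sin_add, sin_sub]
    exact le_of_eq (by ring)

open RealInnerProductSpace in
theorem gradient_comp_continuousLinearMap {E F : Type*} [NormedAddCommGroup E]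
    [InnerProductSpace ℝ E] [CompleteSpace E] [NormedAddCommGroup F] [InnerProductSpace ℝ F]
    [CompleteSpace F] {f : F → ℝ} (L : E →L[ℝ] F) {x : E} (hf : DifferentiableAt ℝ f (L x)) :
    gradient (f ∘ L) x = L.adjoint (gradient f (L x)) := by
  refine ext_inner_right ℝ fun y => ?_
  rw [inner_gradient_left, ContinuousLinearMap.adjoint_inner_left, inner_gradient_left,
    fderiv_comp x hf L.differentiableAt, L.fderiv, ContinuousLinearMap.comp_apply]

noncomputable def spacings (m : ℕ) :
    EuclideanSpace ℝ (Fin (m + 1)) →L[ℝ] EuclideanSpace ℝ (Fin m) :=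
  LinearMap.toContinuousLinearMap
    { toFun x := WithLp.toLp 2 fun i => x i.succ - x i.castSucc
      map_add' x y := by ext i; simp only [PiLp.add_apply]; ring
      map_smul' c x := by ext i; simp only [PiLp.smul_apply, smul_eq_mul, RingHom.id_apply]; ring }

@[simp]
theorem spacings_apply (m : ℕ) (x : EuclideanSpace ℝ (Fin (m + 1))) (i : Fin m) :
    spacings m x i = x i.succ - x i.castSucc := rfl

/-- The sequence `0, v 0, …, v (m - 1), 0, 0, …`. -/
def zeroPad {m : ℕ} (v : EuclideanSpace ℝ (Fin m)) (k : ℕ) : ℝ :=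
  ∑ i : Fin m, if (i : ℕ) + 1 = k then v i else 0

section ZeroPad

variable {m : ℕ} (v : EuclideanSpace ℝ (Fin m))

theorem zeroPad_zero : zeroPad v 0 = 0 := by
  simp [zeroPad]

theorem zeroPad_of_lt {k : ℕ} (hk : m < k) : zeroPad v k = 0 :=
  sum_eq_zero fun i _ => if_neg (by omega)

theorem zeroPad_succ (i : Fin m) : zeroPad v (i + 1) = v i := by
  simp [zeroPad, Fin.val_inj]

theorem sum_range_zeroPad_sq : ∑ k ∈ range (m + 1), zeroPad v k ^ 2 = ‖v‖ ^ 2 := by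
  rw [sum_range_succ', zeroPad_zero,
    ← Fin.sum_univ_eq_sum_range (fun k => zeroPad v (k + 1) ^ 2), EuclideanSpace.norm_sq_eq]
  simp [zeroPad_succ]

theorem adjoint_spacings_apply (j : Fin (m + 1)) :
    (spacings m).adjoint v j = zeroPad v j - zeroPad v (j + 1) := by
  have hj : (spacings m).adjoint v j
      = inner ℝ ((spacings m).adjoint v) (EuclideanSpace.single j 1) := by
    simp [EuclideanSpace.inner_single_right]
  rw [hj, ContinuousLinearMap.adjoint_inner_left, PiLp.inner_apply]
  simp [zeroPad, sub_mul, ite_mul, ← sum_sub_distrib, Fin.ext_iff]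

theorem norm_adjoint_spacings_sq :
    ‖(spacings m).adjoint v‖ ^ 2 = ∑ k ∈ range (m + 1), (zeroPad v (k + 1) - zeroPad v k) ^ 2 := by
  rw [EuclideanSpace.norm_sq_eq,
    ← Fin.sum_univ_eq_sum_range (fun k => (zeroPad v (k + 1) - zeroPad v k) ^ 2)]
  simp [adjoint_spacings_apply, sub_sq_comm]

end ZeroPad

theorem gradient_spacings_bound_general (m : ℕ)
    (f : EuclideanSpace ℝ (Fin m) → ℝ) (hf : ContDiff ℝ 1 f)
    (D : EuclideanSpace ℝ (Fin (m + 1)) → EuclideanSpace ℝ (Fin m))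
    (hD : ∀ x i, D x i = x i.succ - x i.castSucc)
    (x : EuclideanSpace ℝ (Fin (m + 1))) :
    ‖gradient f (D x)‖ ^ 2 ≤
      (1 / (2 - 2 * Real.cos (Real.pi / (m + 1)))) * ‖gradient (f ∘ D) x‖ ^ 2 := by
  obtain rfl : D = spacings m := funext fun y => by ext i; simp [hD]
  set v := gradient f (spacings m x)
  have hgrad : gradient (f ∘ spacings m) x = (spacings m).adjoint v :=
    gradient_comp_continuousLinearMap _ (hf.differentiable one_ne_zero _)
  have hpos : 0 < 2 - 2 * cos (π / (m + 1)) := by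
    have : cos (π / (m + 1)) < cos 0 :=
      cos_lt_cos_of_nonneg_of_le_pi le_rfl (div_le_self pi_pos.le (by simp)) (by positivity)
    linarith [cos_zero]
  have key :=
    two_sub_two_cos_mul_sum_sq_le (m + 1) (zeroPad_zero v) (zeroPad_of_lt v m.lt_succ_self)
  rw [sum_range_zeroPad_sq, ← norm_adjoint_spacings_sq, ← hgrad, Nat.cast_succ] at key
  rw [one_div, ← div_eq_inv_mul, le_div_iff₀ hpos]
  linarith

/-- Chain-rule gradient comparison for the spacings map: if
`g(x) = f(x₂−x₁, …, x_n−x_{n−1})` with `f` continuously differentiable, then at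
every point `‖∇f(y)‖² ≤ λ_n ‖∇g(x)‖²` with `y = (x₂−x₁,…,x_n−x_{n−1})` and
`λ_n = 1/(2−2cos(π/n))` (here `n = m+1`). -/
theorem gradient_spacings_bound (m : ℕ) (hm : 1 ≤ m)
    (f : EuclideanSpace ℝ (Fin m) → ℝ) (hf : ContDiff ℝ 1 f)
    (D : EuclideanSpace ℝ (Fin (m + 1)) → EuclideanSpace ℝ (Fin m))
    (hD : ∀ x i, D x i = x i.succ - x i.castSucc)
    (x : EuclideanSpace ℝ (Fin (m + 1))) :
    ‖gradient f (D x)‖ ^ 2 ≤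
      (1 / (2 - 2 * Real.cos (Real.pi / (m + 1)))) * ‖gradient (f ∘ D) x‖ ^ 2 :=
  gradient_spacings_bound_general m f hf D hD x
end

section
/- Let x₁, …, x_n ∈ [0,1] with Σᵢ xᵢ = 1. Then 0 ≤ (Σᵢ xᵢ² − 2Σᵢ xᵢ³ + (Σᵢ xᵢ²)²) / (2 − Σᵢ (xᵢ − 1/n)²) ≤ 2/(2 − (1 − 1/n)²). -/
/-!
With `A = Σ xᵢ²`, `C = Σ xᵢ³` and `Σ xᵢ = 1`, the denominator is `2 − A + 1/n ≥ 1` because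
`A ≤ 1`. The numerator `A − 2C + A²` is at least `Σ xᵢ²(1 − xᵢ)² ≥ 0` since `Σ xᵢ⁴ ≤ A²`, and at
most `A − A² ≤ 1/4` since `A² ≤ C` by Cauchy–Schwarz. So the quotient lies in `[0, 1]`, while
`2/(2 − (1 − 1/n)²) ≥ 1`.
-/

open Finset

section GiniDrift

variable {ι : Type*}

lemma sum_sub_one_div_card_sq [Fintype ι] (x : ι → ℝ) (hsum : ∑ i, x i = 1) :
    ∑ i, (x i - 1 / Fintype.card ι) ^ 2 = ∑ i, x i ^ 2 - 1 / Fintype.card ι := by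
  have hcard : (Fintype.card ι : ℝ) ≠ 0 := by
    rcases isEmpty_or_nonempty ι with hι | hι
    · simp at hsum
    · exact_mod_cast Fintype.card_ne_zero
  simp only [sub_sq, sum_add_distrib, sum_sub_distrib, ← sum_mul, ← mul_sum, hsum, sum_const,
    card_univ, nsmul_eq_mul]
  field_simp
  ring

lemma sum_sq_le_one (s : Finset ι) (x : ι → ℝ) (hx : ∀ i ∈ s, x i ∈ Set.Icc (0 : ℝ) 1)
    (hsum : ∑ i ∈ s, x i = 1) : ∑ i ∈ s, x i ^ 2 ≤ 1 :=
  hsum ▸ sum_le_sum fun i hi => pow_le_of_le_one (hx i hi).1 (hx i hi).2 two_ne_zero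

lemma sq_sum_sq_le_sum_mul_sum_pow_three (s : Finset ι) (x : ι → ℝ)
    (hx : ∀ i ∈ s, 0 ≤ x i) : (∑ i ∈ s, x i ^ 2) ^ 2 ≤ (∑ i ∈ s, x i) * ∑ i ∈ s, x i ^ 3 :=
  sum_sq_le_sum_mul_sum_of_sq_le_mul s hx (fun i hi => pow_nonneg (hx i hi) 3)
    fun i _ => le_of_eq (by ring)

lemma gini_drift_numerator_nonneg (s : Finset ι) (x : ι → ℝ) :
    0 ≤ ∑ i ∈ s, x i ^ 2 - 2 * ∑ i ∈ s, x i ^ 3 + (∑ i ∈ s, x i ^ 2) ^ 2 := by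
  have htermwise : 0 ≤ ∑ i ∈ s, x i ^ 2 - 2 * ∑ i ∈ s, x i ^ 3 + ∑ i ∈ s, x i ^ 4 := by
    have : ∑ i ∈ s, x i ^ 2 - 2 * ∑ i ∈ s, x i ^ 3 + ∑ i ∈ s, x i ^ 4
        = ∑ i ∈ s, (x i * (1 - x i)) ^ 2 := by
      simp only [mul_sum, ← sum_sub_distrib, ← sum_add_distrib]
      exact sum_congr rfl fun i _ => by ring
    exact this ▸ sum_nonneg fun i _ => sq_nonneg _
  have hfourth : ∑ i ∈ s, x i ^ 4 ≤ (∑ i ∈ s, x i ^ 2) ^ 2 := by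
    simpa only [← pow_mul] using sum_sq_le_sq_sum_of_nonneg fun i _ => sq_nonneg (x i)
  linarith

lemma gini_drift_numerator_le (s : Finset ι) (x : ι → ℝ) (hx : ∀ i ∈ s, 0 ≤ x i)
    (hsum : ∑ i ∈ s, x i = 1) :
    ∑ i ∈ s, x i ^ 2 - 2 * ∑ i ∈ s, x i ^ 3 + (∑ i ∈ s, x i ^ 2) ^ 2 ≤ 1 / 4 := by
  have hCS := sq_sum_sq_le_sum_mul_sum_pow_three s x hx
  rw [hsum, one_mul] at hCS
  nlinarith [sq_nonneg (∑ i ∈ s, x i ^ 2 - 1 / 2)]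

end GiniDrift

lemma one_le_two_div_two_sub_one_sub_one_div_sq (n : ℕ) :
    1 ≤ 2 / (2 - (1 - 1 / (n : ℝ)) ^ 2) := by
  have h0 : 0 ≤ 1 / (n : ℝ) := by positivity
  have h1 : 1 / (n : ℝ) ≤ 1 := by
    rcases n.eq_zero_or_pos with rfl | hn
    · simp
    · exact div_le_one_of_le₀ (by exact_mod_cast hn) (Nat.cast_nonneg n)
  have hsq : (1 - 1 / (n : ℝ)) ^ 2 ≤ 1 := pow_le_one₀ (by linarith) (by linarith)
  rw [one_le_div (by linarith)]
  nlinarith [sq_nonneg (1 - 1 / (n : ℝ))]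

/-- Pointwise bound on the drift of the portfolio generated by the quadratic
Gini coefficient: for market weights `x` in the simplex,
`0 ≤ (Σxᵢ² − 2Σxᵢ³ + (Σxᵢ²)²)/(2 − Σ(xᵢ−1/n)²) ≤ 2/(2 − (1−1/n)²)`. -/
theorem gini_drift_bounds (n : ℕ) (x : Fin n → ℝ)
    (hx : ∀ i, x i ∈ Set.Icc (0 : ℝ) 1) (hsum : ∑ i, x i = 1) :
    0 ≤ ((∑ i, x i ^ 2) - 2 * (∑ i, x i ^ 3) + (∑ i, x i ^ 2) ^ 2) /
        (2 - ∑ i, (x i - 1 / n) ^ 2) ∧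
      ((∑ i, x i ^ 2) - 2 * (∑ i, x i ^ 3) + (∑ i, x i ^ 2) ^ 2) /
          (2 - ∑ i, (x i - 1 / n) ^ 2) ≤
        2 / (2 - (1 - 1 / (n : ℝ)) ^ 2) := by
  have hden : 1 ≤ 2 - ∑ i, (x i - 1 / (n : ℝ)) ^ 2 := by
    have hvar := sum_sub_one_div_card_sq x hsum
    rw [Fintype.card_fin] at hvar
    have hA := sum_sq_le_one univ x (fun i _ => hx i) hsum
    have hinv : 0 ≤ 1 / (n : ℝ) := by positivity
    linarith
  have hnum_le := gini_drift_numerator_le univ x (fun i _ => (hx i).1) hsum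
  refine ⟨div_nonneg (gini_drift_numerator_nonneg univ x) (by linarith), ?_⟩
  calc _ ≤ 1 := div_le_one_of_le₀ (by linarith) (by linarith)
    _ ≤ _ := one_le_two_div_two_sub_one_sub_one_div_sq n
end
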